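/- arXiv:1802.06231 — 3 statements merged into one kernel-verified Lean document; each statement's English description precedes it below -/
import Mathlib

section
/- For the balancing-selection flow φ_t(x) = 1/2 − (1/2)·(1−2x)/√(4x(1−x)(e^{at}−1)+1) with a > 0, for every x ≥ 0 the limit H(x) = lim_{t→∞} φ_t(x·e^{−at}) exists and equals 1/2 − (1/2)/√(4x+1). -/
open Real Filter Topology

/-! In the variable `u = e^{-at}` the rescaled flow `φ_t(x e^{-at})` becomes
`1/2 - (1/2)(1 - 2xu)/√(4x(1 - xu)(1 - u) + 1)`, which is continuous at `u = 0`
as soon as `4x + 1 > 0`; since `e^{-at} → 0`, the limit is its value at `u = 0`. -/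

lemma balancing_radicand_rescale {u v : ℝ} (huv : u * v = 1) (x : ℝ) :
    4 * (x * u) * (1 - x * u) * (v - 1) + 1 = 4 * x * (1 - x * u) * (1 - u) + 1 := by
  linear_combination 4 * x * (1 - x * u) * huv

lemma tendsto_balancing_rescaled_nhds_zero {x : ℝ} (hx : 0 < 4 * x + 1) :
    Tendsto (fun u : ℝ => 1 / 2 - (1 / 2) * (1 - 2 * (x * u)) /
        √(4 * x * (1 - x * u) * (1 - u) + 1)) (𝓝 0)
      (𝓝 (1 / 2 - (1 / 2) / √(4 * x + 1))) := by
  have hcont : ContinuousAt (fun u : ℝ => 1 / 2 - (1 / 2) * (1 - 2 * (x * u)) /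
      √(4 * x * (1 - x * u) * (1 - u) + 1)) 0 := by
    refine continuousAt_const.sub (ContinuousAt.div (by fun_prop) (by fun_prop) ?_)
    simpa using (sqrt_pos.2 hx).ne'
  simpa using hcont.tendsto

lemma tendsto_exp_neg_mul_atTop_nhds_zero {a : ℝ} (ha : 0 < a) :
    Tendsto (fun t : ℝ => exp (-a * t)) atTop (𝓝 0) :=
  tendsto_exp_comp_nhds_zero.2 (tendsto_id.const_mul_atTop_of_neg (neg_lt_zero.2 ha))

/-- For the balancing-selection flow
    φ_t(x) = 1/2 − (1/2)(1−2x)/√(4x(1−x)(e^{at}−1)+1),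
    the limit H(x) = lim_{t→∞} φ_t(x e^{−at}) exists and equals 1/2 − (1/2)/√(4x+1). -/
theorem balancing_selection_H (a : ℝ) (ha : 0 < a)
    (φ : ℝ → ℝ → ℝ)
    (hφ : ∀ t y : ℝ, φ t y =
      1 / 2 - (1 / 2) * (1 - 2 * y) / Real.sqrt (4 * y * (1 - y) * (Real.exp (a * t) - 1) + 1))
    (x : ℝ) (hx : 0 ≤ x) :
    Tendsto (fun t : ℝ => φ t (x * Real.exp (-a * t))) atTop
      (nhds (1 / 2 - (1 / 2) / Real.sqrt (4 * x + 1))) := by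
  refine ((tendsto_balancing_rescaled_nhds_zero (by linarith)).comp
    (tendsto_exp_neg_mul_atTop_nhds_zero ha)).congr fun t => ?_
  have hexp : exp (-a * t) * exp (a * t) = 1 := by rw [← exp_add]; simp
  simp only [Function.comp_apply, hφ, balancing_radicand_rescale hexp]
end

section
/- The function φ_t(x) = 1/2 − (1/2)·(1−2x)/√(4x(1−x)(e^{at}−1)+1) solves the ODE dx/dt = a·x·(1−x)·(1−2x) with initial condition x at t = 0, for x ∈ (0, 1/2). -/
open Real

/-!
Writing `b = 1 - 2x` and `g(t) = 4x(1-x)(e^{at} - 1) + 1 = b² + (1 - b²) e^{at}`, the flow is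
`u = 1/2 - b / (2√g)`. Then `g' = a (g - b²)`, while `1 - 2u = b/√g` and `u(1-u) = (g - b²)/(4g)`,
so both `u'` and `a u (1-u)(1-2u)` equal `a b (g - b²) / (4 g √g)`.
-/

theorem hasDerivAt_half_sub_div_sqrt {g : ℝ → ℝ} {g' t : ℝ} (b : ℝ) (hg : HasDerivAt g g' t)
    (hpos : 0 < g t) :
    HasDerivAt (fun t ↦ 1 / 2 - 1 / 2 * b / √(g t)) (b * g' / (4 * g t * √(g t))) t := by
  have hs : 0 < √(g t) := sqrt_pos.mpr hpos
  refine (((hasDerivAt_const t (1 / 2 * b)).div (hg.sqrt hpos.ne') hs.ne').const_sub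
    (1 / 2)).congr_deriv ?_
  rw [sq_sqrt hpos.le]
  field_simp
  ring

theorem half_sub_div_mul_one_sub_mul_one_sub_two_mul {b s : ℝ} (hs : s ≠ 0) :
    (1 / 2 - 1 / 2 * b / s) * (1 - (1 / 2 - 1 / 2 * b / s)) * (1 - 2 * (1 / 2 - 1 / 2 * b / s)) =
      b * (s ^ 2 - b ^ 2) / (4 * s ^ 3) := by
  field_simp
  ring

theorem four_mul_mul_one_sub_mul_exp_sub_one_add_one_pos {x : ℝ} (hx0 : 0 < x) (hx1 : x < 1)
    (r : ℝ) : 0 < 4 * x * (1 - x) * (exp r - 1) + 1 := by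
  have hc : 0 < 4 * x * (1 - x) := by nlinarith
  nlinarith [mul_pos hc (exp_pos r), sq_nonneg (1 - 2 * x)]

theorem hasDerivAt_four_mul_mul_one_sub_mul_exp_sub_one_add_one (a x t : ℝ) :
    HasDerivAt (fun t ↦ 4 * x * (1 - x) * (exp (a * t) - 1) + 1)
      (a * (4 * x * (1 - x) * (exp (a * t) - 1) + 1 - (1 - 2 * x) ^ 2)) t := by
  have hexp : HasDerivAt (fun t ↦ exp (a * t)) (exp (a * t) * a) t := by
    simpa using ((hasDerivAt_id t).const_mul a).exp
  exact (((hexp.sub_const 1).const_mul (4 * x * (1 - x))).add_const 1).congr_deriv (by ring)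

theorem balancing_selection_flow_general (a : ℝ) (x : ℝ) (hx0 : 0 < x) (hx1 : x < 1 / 2)
    (u : ℝ → ℝ)
    (hu : ∀ t : ℝ, u t =
      1 / 2 - (1 / 2) * (1 - 2 * x) / Real.sqrt (4 * x * (1 - x) * (Real.exp (a * t) - 1) + 1)) :
    u 0 = x ∧ ∀ t : ℝ, 0 ≤ t →
      HasDerivAt u (a * u t * (1 - u t) * (1 - 2 * u t)) t := by
  refine ⟨by norm_num [hu]; ring, fun t _ ↦ ?_⟩
  have hpos := four_mul_mul_one_sub_mul_exp_sub_one_add_one_pos hx0 (by linarith) (a * t)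
  have hderiv := hasDerivAt_half_sub_div_sqrt (1 - 2 * x)
    (hasDerivAt_four_mul_mul_one_sub_mul_exp_sub_one_add_one a x t) hpos
  set r := 4 * x * (1 - x) * (exp (a * t) - 1) + 1
  have hfield : a * u t * (1 - u t) * (1 - 2 * u t) =
      (1 - 2 * x) * (a * (r - (1 - 2 * x) ^ 2)) / (4 * r * √r) := by
    rw [hu t, mul_assoc a, mul_assoc a,
      half_sub_div_mul_one_sub_mul_one_sub_two_mul (sqrt_pos.mpr hpos).ne', sq_sqrt hpos.le,
      pow_succ √r 2, sq_sqrt hpos.le]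
    ring
  rw [hfield, funext hu]
  exact hderiv

/-- The balancing-selection flow solves x' = a x (1-x)(1-2x) with x(0) = x₀. -/
theorem balancing_selection_flow (a : ℝ) (ha : 0 < a) (x : ℝ) (hx0 : 0 < x) (hx1 : x < 1 / 2)
    (u : ℝ → ℝ)
    (hu : ∀ t : ℝ, u t =
      1 / 2 - (1 / 2) * (1 - 2 * x) / Real.sqrt (4 * x * (1 - x) * (Real.exp (a * t) - 1) + 1)) :
    u 0 = x ∧ ∀ t : ℝ, 0 ≤ t →
      HasDerivAt u (a * u t * (1 - u t) * (1 - 2 * u t)) t :=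
  balancing_selection_flow_general a x hx0 hx1 u hu
end

section
/- Let f be C² on [0,∞) with f(0)=0, a := f'(0) > 0, bounded second derivative, and f > 0 on (0, x*) where x* is the smallest positive root of f (or ∞). Define G(x) = ∫₀ˣ (1/f(u) − 1/(a u)) du + (1/a)·log x for x ∈ (0, x*). Then G is strictly increasing on (0, x*), G(x) → −∞ as x → 0⁺, and (assuming additionally f(x) ≤ a·x for all x ≥ 0) G(x) → +∞ as x → x*. Hence G is a bijection from (0, x*) onto ℝ. -/
/-!
Since `G' = 1 / f` on `(0, x*)`, everything reduces to comparing `1 / f` with explicit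
logarithmic derivatives. The bound `f u ≤ a u` gives `1 / f u ≥ 1 / (a u)`, so `G - (1/a) log` is
monotone: this drives `G` to `-∞` at `0⁺` and, when `x* = ∞`, to `+∞` at `∞`. At a finite first
zero `r`, the bounded second derivative makes `f` Lipschitz, `f u ≤ L (r - u)`, so
`G + (1/L) log (r - x)` is monotone and `G → +∞` at `r⁻`. The integral defining `G` converges at
`0` because the Taylor bound `f u ≥ a u - M u² / 2` keeps the integrand bounded there.
Surjectivity then follows from the intermediate value theorem.
-/

open Set Filter MeasureTheory Topology

lemma monotoneOn_sub_of_hasDerivAt_le {D : Set ℝ} (hD : Convex ℝ D) {G H G' H' : ℝ → ℝ}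
    (hG : ∀ x ∈ D, HasDerivAt G (G' x) x) (hH : ∀ x ∈ D, HasDerivAt H (H' x) x)
    (hle : ∀ x ∈ D, H' x ≤ G' x) : MonotoneOn (fun x => G x - H x) D :=
  monotoneOn_of_hasDerivWithinAt_nonneg hD
    (fun x hx => ((hG x hx).sub (hH x hx)).continuousAt.continuousWithinAt)
    (fun x hx => ((hG x (interior_subset hx)).sub (hH x (interior_subset hx))).hasDerivWithinAt)
    (fun x hx => sub_nonneg.2 (hle x (interior_subset hx)))

lemma strictMonoOn_of_hasDerivAt_pos {D : Set ℝ} (hD : Convex ℝ D) {G G' : ℝ → ℝ}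
    (hG : ∀ x ∈ D, HasDerivAt G (G' x) x) (hpos : ∀ x ∈ D, 0 < G' x) : StrictMonoOn G D :=
  strictMonoOn_of_hasDerivWithinAt_pos hD (fun x hx => (hG x hx).continuousAt.continuousWithinAt)
    (fun x hx => (hG x (interior_subset hx)).hasDerivWithinAt)
    (fun x hx => hpos x (interior_subset hx))

section LogComparison

variable {G G' : ℝ → ℝ} {c x₀ : ℝ}

lemma tendsto_nhdsGT_zero_atBot_of_div_le_deriv (hc : 0 < c) (hx₀ : 0 < x₀)
    (hG : ∀ x ∈ Ioc 0 x₀, HasDerivAt G (G' x) x) (hG' : ∀ x ∈ Ioc 0 x₀, c / x ≤ G' x) :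
    Tendsto G (𝓝[>] 0) atBot := by
  have hmono := monotoneOn_sub_of_hasDerivAt_le (convex_Ioc 0 x₀) hG
    (fun x hx => by simpa [div_eq_mul_inv] using (Real.hasDerivAt_log hx.1.ne').const_mul c) hG'
  have hle : ∀ x ∈ Ioc 0 x₀, G x ≤ (G x₀ - c * Real.log x₀) + c * Real.log x := fun x hx => by
    linarith [hmono hx (right_mem_Ioc.2 hx₀) hx.2]
  refine tendsto_atBot_mono' _ ?_
    (tendsto_atBot_add_const_left _ (G x₀ - c * Real.log x₀)
      (Real.tendsto_log_nhdsGT_zero.const_mul_atBot hc))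
  filter_upwards [Ioc_mem_nhdsGT hx₀] with x hx using hle x hx

lemma tendsto_atTop_atTop_of_div_le_deriv (hc : 0 < c) (hx₀ : 0 < x₀)
    (hG : ∀ x ∈ Ici x₀, HasDerivAt G (G' x) x) (hG' : ∀ x ∈ Ici x₀, c / x ≤ G' x) :
    Tendsto G atTop atTop := by
  have hmono := monotoneOn_sub_of_hasDerivAt_le (convex_Ici x₀) hG
    (fun x hx => by
      simpa [div_eq_mul_inv] using (Real.hasDerivAt_log (hx₀.trans_le hx).ne').const_mul c) hG'
  have hle : ∀ x ∈ Ici x₀, (G x₀ - c * Real.log x₀) + c * Real.log x ≤ G x := fun x hx => by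
    linarith [hmono self_mem_Ici hx hx]
  refine tendsto_atTop_mono' _ ?_
    (tendsto_atTop_add_const_left _ (G x₀ - c * Real.log x₀)
      (Real.tendsto_log_atTop.const_mul_atTop hc))
  filter_upwards [Ici_mem_atTop x₀] with x hx using hle x hx

lemma tendsto_nhdsLT_atTop_of_div_sub_le_deriv {r : ℝ} (hc : 0 < c) (hx₀ : x₀ < r)
    (hG : ∀ x ∈ Ico x₀ r, HasDerivAt G (G' x) x) (hG' : ∀ x ∈ Ico x₀ r, c / (r - x) ≤ G' x) :
    Tendsto G (𝓝[<] r) atTop := by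
  have hlog : ∀ x ∈ Ico x₀ r,
      HasDerivAt (fun x => -(c * Real.log (r - x))) (c / (r - x)) x := fun x hx => by
    have := (((hasDerivAt_id' x).const_sub r).log (sub_pos.2 hx.2).ne').const_mul c
    exact this.neg.congr_deriv (by ring)
  have hmono := monotoneOn_sub_of_hasDerivAt_le (convex_Ico x₀ r) hG hlog hG'
  have hle : ∀ x ∈ Ico x₀ r, (G x₀ + c * Real.log (r - x₀)) - c * Real.log (r - x) ≤ G x :=
    fun x hx => by linarith [hmono (left_mem_Ico.2 hx₀) hx hx.1]
  have hsub : Tendsto (fun x => r - x) (𝓝[<] r) (𝓝[>] 0) := by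
    refine tendsto_nhdsWithin_of_tendsto_nhds_of_eventually_within _ ?_ ?_
    · simpa using ((continuous_sub_left r).tendsto r).mono_left nhdsWithin_le_nhds
    · filter_upwards [self_mem_nhdsWithin] with x hx using sub_pos.2 (mem_Iio.1 hx)
  refine tendsto_atTop_mono' _ ?_ (tendsto_atTop_add_const_left _ (G x₀ + c * Real.log (r - x₀))
    (tendsto_neg_atBot_atTop.comp ((Real.tendsto_log_nhdsGT_zero.comp hsub).const_mul_atBot hc)))
  filter_upwards [Ico_mem_nhdsLT hx₀] with x hx
  simpa [sub_eq_add_neg] using hle x hx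

end LogComparison

section SecondDerivativeBound

variable {f : ℝ → ℝ} {M : ℝ}

lemma abs_deriv_sub_deriv_zero_le (hf : ContDiff ℝ 2 f)
    (hf'' : ∀ v ∈ Ici (0:ℝ), |deriv (deriv f) v| ≤ M) {t : ℝ} (ht : 0 ≤ t) :
    |deriv f t - deriv f 0| ≤ M * t := by
  have hd : Differentiable ℝ (deriv f) := (hf.iterate_deriv' 1 1).differentiable one_ne_zero
  simpa using norm_image_sub_le_of_norm_deriv_le_segment'
    (fun x _ => (hd x).hasDerivAt.hasDerivWithinAt) (fun x hx => hf'' x hx.1) t ⟨ht, le_rfl⟩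

lemma quadratic_le_of_abs_deriv_deriv_le (hf : ContDiff ℝ 2 f)
    (hf'' : ∀ v ∈ Ici (0:ℝ), |deriv (deriv f) v| ≤ M) {u : ℝ} (hu : 0 ≤ u) :
    f 0 + deriv f 0 * u - M / 2 * u ^ 2 ≤ f u := by
  have hd : Differentiable ℝ f := hf.differentiable two_ne_zero
  have hquad : ∀ x, HasDerivAt (fun x => f 0 + deriv f 0 * x - M / 2 * x ^ 2)
      (deriv f 0 - M * x) x := fun x =>
    ((((hasDerivAt_id' x).const_mul (deriv f 0)).const_add (f 0)).sub
      ((hasDerivAt_pow 2 x).const_mul (M / 2))).congr_deriv (by ring)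
  have hmono := monotoneOn_sub_of_hasDerivAt_le (convex_Ici 0) (fun x _ => (hd x).hasDerivAt)
    (fun x _ => hquad x) fun x hx => by
      linarith [abs_le.1 (abs_deriv_sub_deriv_zero_le hf hf'' (mem_Ici.1 hx))]
  simpa using hmono self_mem_Ici hu hu

lemma abs_sub_le_of_abs_deriv_deriv_le (hf : ContDiff ℝ 2 f)
    (hf'' : ∀ v ∈ Ici (0:ℝ), |deriv (deriv f) v| ≤ M) {u r : ℝ} (hu : 0 ≤ u) (hur : u ≤ r) :
    |f r - f u| ≤ (|deriv f 0| + M * r) * (r - u) := by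
  have hd : Differentiable ℝ f := hf.differentiable two_ne_zero
  have hM : 0 ≤ M := (abs_nonneg _).trans (hf'' 0 self_mem_Ici)
  refine norm_image_sub_le_of_norm_deriv_le_segment'
    (fun x _ => (hd x).hasDerivAt.hasDerivWithinAt) (fun x hx => ?_) r ⟨hur, le_rfl⟩
  have hx0 : 0 ≤ x := hu.trans hx.1
  rw [Real.norm_eq_abs]
  linarith [abs_sub_abs_le_abs_sub (deriv f x) (deriv f 0),
    abs_deriv_sub_deriv_zero_le hf hf'' hx0, mul_le_mul_of_nonneg_left hx.2.le hM]

end SecondDerivativeBound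

-- Along a solution of `x' = f x` this increases at unit speed; the `log` term renormalizes the
-- divergence of `∫ 1 / f` at `0` by that of the linearization `f u ≈ a u`.
noncomputable def flowTime (f : ℝ → ℝ) (a x : ℝ) : ℝ :=
  (∫ u in Ioc (0:ℝ) x, (1 / f u - 1 / (a * u))) + (1 / a) * Real.log x

lemma one_div_sub_one_div_mul_le {a M u y : ℝ} (ha : 0 < a) (hu : 0 < u) (hMu : M * u ≤ a)
    (hlow : a * u - M / 2 * u ^ 2 ≤ y) (hle : y ≤ a * u) : 1 / y - 1 / (a * u) ≤ M / a ^ 2 := by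
  have hau : 0 < a * u := mul_pos ha hu
  have hy : a * u / 2 ≤ y := by nlinarith
  have hM : 0 ≤ M := by nlinarith [pow_pos hu 2]
  rw [div_sub_div _ _ (by linarith) hau.ne', div_le_div_iff₀ (by nlinarith) (by positivity)]
  nlinarith [mul_le_mul_of_nonneg_left hy (mul_nonneg hM hau.le),
    mul_le_mul_of_nonneg_right (show a * u - y ≤ M / 2 * u ^ 2 by linarith) (sq_nonneg a)]

section Integrand

variable {f : ℝ → ℝ} {a M x : ℝ}

lemma measurable_flowTime_integrand (hfc : Continuous f) :
    Measurable fun u => 1 / f u - 1 / (a * u) := by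
  have := hfc.measurable
  fun_prop

lemma integrableOn_flowTime_integrand (hf : ContDiff ℝ 2 f) (hf0 : f 0 = 0)
    (ha : deriv f 0 = a) (ha0 : 0 < a) (hf'' : ∀ v ∈ Ici (0:ℝ), |deriv (deriv f) v| ≤ M)
    (hlin : ∀ u, 0 ≤ u → f u ≤ a * u) (hx : 0 < x) (hpos : ∀ u ∈ Ioc 0 x, 0 < f u) :
    IntegrableOn (fun u => 1 / f u - 1 / (a * u)) (Ioc 0 x) := by
  have hM : 0 ≤ M := (abs_nonneg _).trans (hf'' 0 self_mem_Ici)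
  have hlow : ∀ u, 0 ≤ u → a * u - M / 2 * u ^ 2 ≤ f u := fun u hu => by
    simpa [hf0, ha] using quadratic_le_of_abs_deriv_deriv_le hf hf'' hu
  set m := min (a / (M + 1)) x
  have hm : 0 < m := lt_min (by positivity) hx
  rw [← Ioc_union_Ioc_eq_Ioc hm.le (min_le_right _ _)]
  refine IntegrableOn.union ?_ ?_
  · refine Measure.integrableOn_of_bounded (M := M / a ^ 2) measure_Ioc_lt_top.ne
      (measurable_flowTime_integrand hf.continuous).aestronglyMeasurable
      ((ae_restrict_iff' measurableSet_Ioc).2 (ae_of_all _ fun u hu => ?_))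
    have hmx : Ioc 0 m ⊆ Ioc 0 x := Ioc_subset_Ioc_right (min_le_right _ _)
    have hMu : M * u ≤ a := by
      have : u ≤ a / (M + 1) := hu.2.trans (min_le_left _ _)
      rw [le_div_iff₀ (by positivity)] at this
      nlinarith [hu.1]
    have hnonneg : 0 ≤ 1 / f u - 1 / (a * u) :=
      sub_nonneg.2 (one_div_le_one_div_of_le (hpos u (hmx hu)) (hlin u hu.1.le))
    rw [Real.norm_eq_abs, abs_of_nonneg hnonneg]
    exact one_div_sub_one_div_mul_le ha0 hu.1 hMu (hlow u hu.1.le) (hlin u hu.1.le)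
  · refine (ContinuousOn.integrableOn_Icc ?_).mono_set Ioc_subset_Icc_self
    refine (continuousOn_const.div hf.continuous.continuousOn fun u hu => ?_).sub
      (continuousOn_const.div (by fun_prop) fun u hu => ?_)
    · exact (hpos u ⟨hm.trans_le hu.1, hu.2⟩).ne'
    · exact (mul_pos ha0 (hm.trans_le hu.1)).ne'

lemma hasDerivAt_flowTime (hfc : Continuous f) (hx : 0 < x) (hfx : f x ≠ 0)
    (hint : IntegrableOn (fun u => 1 / f u - 1 / (a * u)) (Ioc 0 x)) :
    HasDerivAt (flowTime f a) (1 / f x) x := by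
  have hcont : ContinuousAt (fun u => 1 / f u - 1 / (a * u)) x := by
    simp only [one_div, mul_inv]
    exact (hfc.continuousAt.inv₀ hfx).sub (continuousAt_const.mul (continuousAt_inv₀ hx.ne'))
  have hF := intervalIntegral.integral_hasDerivAt_right
    ((intervalIntegrable_iff_integrableOn_Ioc_of_le hx.le).2 hint)
    (measurable_flowTime_integrand hfc).aestronglyMeasurable.stronglyMeasurableAtFilter hcont
  have heq : flowTime f a =ᶠ[𝓝 x]
      fun y => (∫ u in (0:ℝ)..y, (1 / f u - 1 / (a * u))) + (1 / a) * Real.log y := by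
    filter_upwards [Ioi_mem_nhds hx] with y hy
    rw [flowTime, intervalIntegral.integral_of_le (mem_Ioi.1 hy).le]
  refine ((hF.add ((Real.hasDerivAt_log hx.ne').const_mul (1 / a))).congr_of_eventuallyEq
    heq).congr_deriv ?_
  rw [one_div_mul_eq_div, one_div (a * x), mul_inv]
  ring

end Integrand

lemma EReal.comap_coe_nhdsLT_coe (r : ℝ) :
    comap ((↑) : ℝ → EReal) (𝓝[<] (r : EReal)) = 𝓝[<] r := by
  rw [nhdsWithin, nhdsWithin, comap_inf, comap_principal,
    ← EReal.isEmbedding_coe.isInducing.nhds_eq_comap]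
  congr
  ext
  simp

lemma EReal.comap_coe_nhdsLT_top : comap ((↑) : ℝ → EReal) (𝓝[<] ⊤) = atTop := by
  refine le_antisymm ((atTop_basis_Ioi.ge_iff).2 fun b _ => ?_) ?_
  · exact ⟨Ioi (b : EReal), mem_nhdsWithin_of_mem_nhds (Ioi_mem_nhds (EReal.coe_lt_top b)),
      fun x hx => EReal.coe_lt_coe_iff.1 hx⟩
  · rw [← tendsto_iff_comap]
    exact tendsto_nhdsWithin_iff.2
      ⟨EReal.tendsto_coe_atTop, Eventually.of_forall EReal.coe_lt_top⟩

lemma EReal.ordConnected_setOf_pos_coe_lt (s : EReal) :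
    {x : ℝ | 0 < x ∧ (x : EReal) < s}.OrdConnected := by
  rw [show {x : ℝ | 0 < x ∧ (x : EReal) < s} = (↑) ⁻¹' Ioo 0 s by ext; simp [EReal.coe_pos]]
  exact ordConnected_Ioo.preimage_mono EReal.coe_strictMono.monotone

lemma EReal.neBot_comap_coe_nhdsLT_inf_principal {s : EReal} (hs : 0 < s) :
    (comap ((↑) : ℝ → EReal) (𝓝[<] s) ⊓ 𝓟 {x : ℝ | 0 < x ∧ (x : EReal) < s}).NeBot := by
  have hI : {x : ℝ | 0 < x ∧ (x : EReal) < s} = (↑) ⁻¹' Ioo 0 s := by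
    ext
    simp [EReal.coe_pos]
  rw [hI, ← comap_principal, ← comap_inf, ← nhdsWithin_inter',
    inter_eq_right.2 Ioo_subset_Iio_self, nhdsWithin_Ioo_eq_nhdsLT hs]
  refine NeBot.comap_of_range_mem (nhdsLT_neBot_of_exists_lt ⟨0, hs⟩)
    (mem_of_superset (Ioo_mem_nhdsLT hs) fun y hy => ⟨y.toReal, ?_⟩)
  exact EReal.coe_toReal hy.2.ne_top (bot_le.trans_lt hy.1).ne'

lemma tendsto_comap_coe_nhdsLT_first_zero {f G : ℝ → ℝ} {a M : ℝ} {s : EReal}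
    (hf : ContDiff ℝ 2 f) (hf'' : ∀ v ∈ Ici (0:ℝ), |deriv (deriv f) v| ≤ M)
    (ha : deriv f 0 = a) (ha0 : 0 < a) (hlin : ∀ u, 0 ≤ u → f u ≤ a * u) (hs : 0 < s)
    (hG : ∀ x : ℝ, 0 < x → (x : EReal) < s → HasDerivAt G (1 / f x) x)
    (hpos : ∀ x : ℝ, 0 < x → (x : EReal) < s → 0 < f x)
    (hroot : s = ⊤ ∨ ∃ r : ℝ, s = r ∧ f r = 0) :
    Tendsto G (comap (↑) (𝓝[<] s)) atTop := by
  rcases hroot with rfl | ⟨r, rfl, hr⟩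
  · rw [EReal.comap_coe_nhdsLT_top]
    have hx : ∀ x ∈ Ici (1:ℝ), 0 < x := fun x hx => one_pos.trans_le hx
    refine tendsto_atTop_atTop_of_div_le_deriv (one_div_pos.2 ha0) one_pos
      (fun x h => hG x (hx x h) (EReal.coe_lt_top x)) fun x h => ?_
    rw [div_div]
    exact one_div_le_one_div_of_le (hpos x (hx x h) (EReal.coe_lt_top x)) (hlin x (hx x h).le)
  · have hr0 : 0 < r := EReal.coe_pos.1 hs
    have hM : 0 ≤ M := (abs_nonneg _).trans (hf'' 0 self_mem_Ici)
    rw [EReal.comap_coe_nhdsLT_coe]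
    have hx : ∀ x ∈ Ico (r / 2) r, 0 < x ∧ (x : EReal) < r := fun x h =>
      ⟨by linarith [h.1], EReal.coe_lt_coe_iff.2 h.2⟩
    refine tendsto_nhdsLT_atTop_of_div_sub_le_deriv (c := 1 / (a + M * r)) (by positivity)
      (by linarith) (fun x h => hG x (hx x h).1 (hx x h).2) fun x h => ?_
    have hlip := abs_sub_le_of_abs_deriv_deriv_le hf hf'' (hx x h).1.le h.2.le
    rw [hr, zero_sub, abs_neg, ha, abs_of_pos ha0] at hlip
    rw [div_div]
    exact one_div_le_one_div_of_le (hpos x (hx x h).1 (hx x h).2) ((le_abs_self _).trans hlip)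

/-- Let f be C² with f(0)=0, a=f'(0)>0, |f''| ≤ M on [0,∞), f(x) ≤ ax on [0,∞),
    and f > 0 on (0,x*) where x* ∈ (0,∞] is the first positive zero of f (⊤ if none).
    Then G(x) = ∫₀ˣ (1/f − 1/(a·)) + (1/a) log x is strictly increasing on
    I = (0, x*), tends to −∞ at 0⁺, tends to +∞ at x*, and is a bijection from I onto ℝ. -/
theorem G_bijection (f : ℝ → ℝ) (a M : ℝ) (xstar : EReal)
    (I : Set ℝ) (hI : I = {x : ℝ | 0 < x ∧ (x : EReal) < xstar})
    (hf : ContDiff ℝ 2 f) (hf0 : f 0 = 0) (ha : deriv f 0 = a) (ha0 : 0 < a)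
    (hf'' : ∀ v ∈ Ici (0:ℝ), |deriv (deriv f) v| ≤ M)
    (hlin : ∀ x ∈ Ici (0:ℝ), f x ≤ a * x)
    (hxstar : 0 < xstar)
    (hfpos : ∀ x ∈ I, 0 < f x)
    (hroot : xstar = ⊤ ∨ ∃ r : ℝ, xstar = (r : EReal) ∧ f r = 0)
    (G : ℝ → ℝ)
    (hG : ∀ x : ℝ, G x =
      (∫ u in Ioc (0:ℝ) x, (1 / f u - 1 / (a * u))) + (1 / a) * Real.log x) :
    StrictMonoOn G I ∧
    Tendsto G (nhdsWithin 0 (Ioi 0)) atBot ∧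
    Tendsto G ((Filter.comap (fun x : ℝ => (x : EReal)) (nhdsWithin xstar (Iio xstar))) ⊓
      Filter.principal I) atTop ∧
    Set.BijOn G I Set.univ := by
  obtain rfl : G = flowTime f a := funext hG
  subst hI
  set I := {x : ℝ | 0 < x ∧ (x : EReal) < xstar}
  have hIoc : ∀ x ∈ I, Ioc 0 x ⊆ I := fun x hx u hu =>
    ⟨hu.1, (EReal.coe_le_coe_iff.2 hu.2).trans_lt hx.2⟩
  have hIconn : I.OrdConnected := EReal.ordConnected_setOf_pos_coe_lt xstar
  have hderiv : ∀ x ∈ I, HasDerivAt (flowTime f a) (1 / f x) x := fun x hx =>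
    hasDerivAt_flowTime hf.continuous hx.1 (hfpos x hx).ne' <|
      integrableOn_flowTime_integrand hf hf0 ha ha0 hf'' hlin hx.1 fun u hu =>
        hfpos u (hIoc x hx hu)
  have hmono : StrictMonoOn (flowTime f a) I :=
    strictMonoOn_of_hasDerivAt_pos hIconn.convex hderiv fun x hx => one_div_pos.2 (hfpos x hx)
  have := EReal.neBot_comap_coe_nhdsLT_inf_principal hxstar
  obtain ⟨x₀, hx₀⟩ := Filter.nonempty_of_mem (mem_inf_of_right (mem_principal_self I) :
    I ∈ comap (↑) (𝓝[<] xstar) ⊓ 𝓟 I)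
  have hbot : Tendsto (flowTime f a) (𝓝[>] 0) atBot :=
    tendsto_nhdsGT_zero_atBot_of_div_le_deriv (one_div_pos.2 ha0) hx₀.1
      (fun x hx => hderiv x (hIoc x₀ hx₀ hx)) fun x hx => by
        rw [div_div]
        exact one_div_le_one_div_of_le (hfpos x (hIoc x₀ hx₀ hx)) (hlin x hx.1.le)
  have htop : Tendsto (flowTime f a) (comap (↑) (𝓝[<] xstar) ⊓ 𝓟 I) atTop :=
    (tendsto_comap_coe_nhdsLT_first_zero hf hf'' ha ha0 hlin hxstar
      (fun x h₁ h₂ => hderiv x ⟨h₁, h₂⟩) (fun x h₁ h₂ => hfpos x ⟨h₁, h₂⟩) hroot).mono_left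
      inf_le_left
  have hI₀ : 𝓝[>] (0:ℝ) ≤ 𝓟 I := le_principal_iff.2 <|
    mem_of_superset (Ioo_mem_nhdsGT hx₀.1) fun x hx => hIoc x₀ hx₀ ⟨hx.1, hx.2.le⟩
  exact ⟨hmono, hbot, htop, mapsTo_univ _ _, hmono.injOn,
    hIconn.isPreconnected.intermediate_value_Iii hI₀ inf_le_right
      (fun x hx => (hderiv x hx).continuousAt.continuousWithinAt) hbot htop⟩
end
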